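/- Let G be a graph, F ⊆ E^G, and let Δ be a drawing of G in which no edge of F is involved in any crossing. Suppose Δ has at least one crossing, say x ∈ Δ(e1) ∩ Δ(e2) for distinct edges e1, e2. Then e1, e2 ∉ F, and the graph G^{e1×e2} has a drawing with at most (crossing number of Δ) − 1 crossings in which no edge of F is involved in any crossing. In particular, if l ≥ 1 and G has an l-good drawing with respect to F that has at least one crossing, then there exist distinct edges e1, e2 ∈ E^G ∖ F such that G^{e1×e2} has an (l−1)-good drawing with respect to F. -/

import Mathlib

lemma sym2_out_eq {α : Type} (s : Sym2 α) : s = s((Quot.out s).1, (Quot.out s).2) := by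
  exact (Quot.out_eq s).symm

lemma sym2_out_fst_mem {α : Type} (s : Sym2 α) : (Quot.out s).1 ∈ s := by
  set p := Quot.out s with hp
  rw [sym2_out_eq s, ← hp]
  exact Sym2.mem_mk_left _ _

lemma sym2_out_snd_mem {α : Type} (s : Sym2 α) : (Quot.out s).2 ∈ s := by
  set p := Quot.out s with hp
  rw [sym2_out_eq s, ← hp]
  exact Sym2.mem_mk_right _ _

lemma sym2_out_ne {α : Type} (s : Sym2 α) (h : ¬ s.IsDiag) : (Quot.out s).1 ≠ (Quot.out s).2 := by
  intro he
  exact h (by rw [sym2_out_eq s]; exact Sym2.mk_isDiag_iff.mpr he)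

/-! ### Basic multigraphs -/

/-- A multigraph: undirected, loop-free, possibly with multiple (parallel) edges.
Each edge is assigned its unordered pair of (distinct) endpoints. -/
structure MGraph where
  V : Type
  E : Type
  ends : E → Sym2 V
  loopless : ∀ e : E, ¬ (ends e).IsDiag

namespace MGraph

/-- Walks in a multigraph. -/
inductive Walk (G : MGraph) : G.V → G.V → Type where
  | nil (v : G.V) : Walk G v v
  | cons {u v w : G.V} (e : G.E) (he : G.ends e = s(u, v)) (p : Walk G v w) : Walk G u w

namespace Walk

variable {G : MGraph}

/-- The list of vertices visited by a walk (in order, including both endpoints). -/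
def support : ∀ {u v : G.V}, G.Walk u v → List G.V
  | u, _, .nil _ => [u]
  | u, _, .cons _ _ p => u :: p.support

/-- The list of edges traversed by a walk. -/
def edgeList : ∀ {u v : G.V}, G.Walk u v → List G.E
  | _, _, .nil _ => []
  | _, _, .cons e _ p => e :: p.edgeList

lemma start_mem_support : ∀ {u v : G.V} (w : G.Walk u v), u ∈ w.support
  | _, _, .nil _ => List.mem_singleton_self _
  | _, _, .cons _ _ _ => List.mem_cons_self

lemma end_mem_support : ∀ {u v : G.V} (w : G.Walk u v), v ∈ w.support
  | _, _, .nil _ => List.mem_singleton_self _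
  | _, _, .cons _ _ p => List.mem_cons_of_mem _ (end_mem_support p)

lemma mem_support_of_mem_edgeList :
    ∀ {u v : G.V} (w : G.Walk u v) (f : G.E) (x : G.V),
      f ∈ w.edgeList → x ∈ G.ends f → x ∈ w.support
  | _, _, .nil _, f, x, hf, _ => by simp [edgeList] at hf
  | u, v, .cons e he p, f, x, hf, hx => by
      rcases List.mem_cons.mp hf with h | h
      · subst h
        rw [he, Sym2.mem_iff] at hx
        rcases hx with rfl | rfl
        · exact start_mem_support _
        · exact List.mem_cons_of_mem _ (start_mem_support p)
      · exact List.mem_cons_of_mem _ (mem_support_of_mem_edgeList p f x h hx)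

/-- A walk is a path if it visits no vertex twice. -/
def IsPath {u v : G.V} (w : G.Walk u v) : Prop := w.support.Nodup

/-- A closed walk is a cycle if it is nontrivial, repeats no edge,
and repeats no vertex except the first = last one. -/
def IsCycleW {u : G.V} (w : G.Walk u u) : Prop :=
  w.edgeList ≠ [] ∧ w.edgeList.Nodup ∧ w.support.tail.Nodup

end Walk

/-! ### Subgraphs -/

/-- A subgraph of `G`, given by a set of vertices and a set of edges all of whose
endpoints belong to the vertex set. -/
structure Subgraph (G : MGraph) where
  verts : Set G.V
  edges : Set G.E
  closed : ∀ e ∈ edges, ∀ v ∈ G.ends e, v ∈ verts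

namespace Subgraph

variable {G : MGraph}

/-- The subgraph consisting of all of `G`. -/
def top (G : MGraph) : G.Subgraph where
  verts := Set.univ
  edges := Set.univ
  closed := fun _ _ _ _ => Set.mem_univ _

/-- Union of two subgraphs. -/
def union (A B : G.Subgraph) : G.Subgraph where
  verts := A.verts ∪ B.verts
  edges := A.edges ∪ B.edges
  closed := by
    rintro e (he | he) v hv
    · exact Or.inl (A.closed e he v hv)
    · exact Or.inr (B.closed e he v hv)

/-- Union of a set of subgraphs. -/
def sUnion (𝒮 : Set G.Subgraph) : G.Subgraph where
  verts := ⋃ S ∈ 𝒮, S.verts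
  edges := ⋃ S ∈ 𝒮, S.edges
  closed := by
    intro e he v hv
    simp only [Set.mem_iUnion] at he ⊢
    obtain ⟨S, hS, heS⟩ := he
    exact ⟨S, hS, S.closed e heS v hv⟩

/-- Delete a set of vertices (and all edges touching them) from a subgraph. -/
def delete (S : G.Subgraph) (A : Set G.V) : G.Subgraph where
  verts := S.verts \ A
  edges := {e ∈ S.edges | ∀ v ∈ G.ends e, v ∉ A}
  closed := fun e he v hv => ⟨S.closed e he.1 v hv, he.2 v hv⟩

/-- The subgraph, viewed as a graph in its own right. -/
def toGraph (S : G.Subgraph) : MGraph where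
  V := {v : G.V // v ∈ S.verts}
  E := {e : G.E // e ∈ S.edges}
  ends := fun e => (G.ends e.val).attachWith (fun v hv => S.closed e.val e.2 v hv)
  loopless := by
    intro e he
    have h2 := Sym2.IsDiag.map (f := Subtype.val) he
    rw [Sym2.attachWith_map_subtypeVal] at h2
    exact G.loopless e.val h2

lemma toGraph_ends {S : G.Subgraph} (e : S.toGraph.E) {v w : G.V}
    (hvw : G.ends e.val = s(v, w)) (hv : v ∈ S.verts) (hw : w ∈ S.verts) :
    S.toGraph.ends e = s((⟨v, hv⟩ : {v : G.V // v ∈ S.verts}), ⟨w, hw⟩) := by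
  apply Sym2.map.injective Subtype.val_injective
  show Sym2.map Subtype.val ((G.ends e.val).attachWith _) = _
  rw [Sym2.attachWith_map_subtypeVal, Sym2.map_pair_eq, hvw]

lemma toGraph_mem_ends {S : G.Subgraph} (e : S.toGraph.E) (x : S.toGraph.V) :
    x ∈ S.toGraph.ends e ↔ x.val ∈ G.ends e.val := by
  constructor
  · intro hx
    have h2 : x.val ∈ Sym2.map Subtype.val (S.toGraph.ends e) :=
      Sym2.mem_map.mpr ⟨x, hx, rfl⟩
    rwa [show Sym2.map Subtype.val (S.toGraph.ends e) = G.ends e.val from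
      Sym2.attachWith_map_subtypeVal _] at h2
  · intro hx
    have h2 : x.val ∈ Sym2.map Subtype.val (S.toGraph.ends e) := by
      rwa [show Sym2.map Subtype.val (S.toGraph.ends e) = G.ends e.val from
        Sym2.attachWith_map_subtypeVal _]
    obtain ⟨y, hy, hyx⟩ := Sym2.mem_map.mp h2
    rwa [show y = x from Subtype.ext hyx] at hy

/-- Reachability within a subgraph: a walk of `G` all of whose vertices and
edges belong to the subgraph. -/
def Reach (S : G.Subgraph) (u v : G.V) : Prop :=
  ∃ w : G.Walk u v, (∀ x ∈ w.support, x ∈ S.verts) ∧ ∀ e ∈ w.edgeList, e ∈ S.edges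

/-- A subgraph is connected if it is nonempty and any two of its vertices are
joined by a walk inside it. -/
def Connected (S : G.Subgraph) : Prop :=
  S.verts.Nonempty ∧ ∀ u ∈ S.verts, ∀ v ∈ S.verts, S.Reach u v

end Subgraph

/-- The induced subgraph on a vertex set `A`. -/
def induce (G : MGraph) (A : Set G.V) : G.Subgraph where
  verts := A
  edges := {e | ∀ v ∈ G.ends e, v ∈ A}
  closed := fun _ he v hv => he v hv

/-- `G ∖ A`: delete the vertices in `A`, keeping only edges with no endpoint in `A`. -/
def deleteVerts (G : MGraph) (A : Set G.V) : G.Subgraph :=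
  G.induce Aᶜ

end MGraph
/-! ### Drawings in the plane -/

/-- A drawing of a graph in the plane.  Every vertex is assigned a point and every
edge a simple curve (given by an injective continuous parametrization on `[0,1]`)
joining the images of its endpoints; distinct vertices get distinct points;
distinct edge curves meet in at most one interior point; no curve passes through the
image of a vertex other than its endpoints; and no point which is not the image of a
vertex lies on more than two edge curves. -/
structure Drawing (G : MGraph) where
  vpos : G.V → ℝ × ℝ
  par : G.E → ℝ → ℝ × ℝ
  par_cont : ∀ e, ContinuousOn (par e) (Set.Icc 0 1)
  par_inj : ∀ e, Set.InjOn (par e) (Set.Icc 0 1)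
  ends_match : ∀ e, ∃ v w : G.V, G.ends e = s(v, w) ∧ par e 0 = vpos v ∧ par e 1 = vpos w
  vpos_inj : Function.Injective vpos
  arcs_inter : ∀ e f : G.E, e ≠ f →
    Set.Subsingleton (par e '' Set.Ioo 0 1 ∩ par f '' Set.Ioo 0 1)
  vertex_on_arc : ∀ (e : G.E) (v : G.V), vpos v ∈ par e '' Set.Icc 0 1 → v ∈ G.ends e
  at_most_two : ∀ x : ℝ × ℝ, x ∉ Set.range vpos →
    ∀ e₁ e₂ e₃ : G.E, x ∈ par e₁ '' Set.Icc 0 1 → x ∈ par e₂ '' Set.Icc 0 1 →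
      x ∈ par e₃ '' Set.Icc 0 1 → e₁ = e₂ ∨ e₁ = e₃ ∨ e₂ = e₃

namespace Drawing

variable {G : MGraph}

/-- The curve drawn for the edge `e`. -/
def arc (Δ : Drawing G) (e : G.E) : Set (ℝ × ℝ) := Δ.par e '' Set.Icc 0 1

/-- A crossing of a drawing: a point which is not the image of a vertex and lies on
two distinct edge curves. -/
def IsCrossing (Δ : Drawing G) (x : ℝ × ℝ) : Prop :=
  x ∉ Set.range Δ.vpos ∧ ∃ e f : G.E, e ≠ f ∧ x ∈ Δ.arc e ∧ x ∈ Δ.arc f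

/-- The set of crossings of a drawing. -/
def crossings (Δ : Drawing G) : Set (ℝ × ℝ) := {x | Δ.IsCrossing x}

/-- The drawing has at most `k` crossings. -/
def CrossingsAtMost (Δ : Drawing G) (k : ℕ) : Prop :=
  Δ.crossings.Finite ∧ Δ.crossings.ncard ≤ k

/-- The edge `e` is involved in some crossing of the drawing. -/
def Involved (Δ : Drawing G) (e : G.E) : Prop :=
  ∃ x : ℝ × ℝ, Δ.IsCrossing x ∧ x ∈ Δ.arc e

/-- An `l`-good drawing with respect to a set `F` of forbidden edges:
at most `l` crossings, and no forbidden edge is involved in any crossing. -/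
def IsGood (Δ : Drawing G) (l : ℕ) (F : Set G.E) : Prop :=
  Δ.CrossingsAtMost l ∧ ∀ e ∈ F, ¬ Δ.Involved e

/-- The image of a subgraph under a drawing: all vertex points and edge curves of
the subgraph. -/
def subImage (Δ : Drawing G) (S : G.Subgraph) : Set (ℝ × ℝ) :=
  Δ.vpos '' S.verts ∪ ⋃ e ∈ S.edges, Δ.arc e

/-- The restriction of a drawing to a subgraph. -/
def restrict (Δ : Drawing G) (S : G.Subgraph) : Drawing S.toGraph where
  vpos := fun v => Δ.vpos v.val
  par := fun e => Δ.par e.val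
  par_cont := fun e => Δ.par_cont e.val
  par_inj := fun e => Δ.par_inj e.val
  ends_match := by
    intro e
    obtain ⟨v, w, hvw, h0, h1⟩ := Δ.ends_match e.val
    have hv : v ∈ S.verts := S.closed e.val e.2 v (by rw [hvw]; exact Sym2.mem_mk_left _ _)
    have hw : w ∈ S.verts := S.closed e.val e.2 w (by rw [hvw]; exact Sym2.mem_mk_right _ _)
    exact ⟨⟨v, hv⟩, ⟨w, hw⟩, MGraph.Subgraph.toGraph_ends e hvw hv hw, h0, h1⟩
  vpos_inj := fun v w h => Subtype.ext (Δ.vpos_inj h)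
  arcs_inter := fun e f hef =>
    Δ.arcs_inter e.val f.val (fun h => hef (Subtype.ext h))
  vertex_on_arc := by
    intro e v hv
    exact (MGraph.Subgraph.toGraph_mem_ends e v).mpr (Δ.vertex_on_arc e.val v.val hv)
  at_most_two := by
    intro x hx e₁ e₂ e₃ h₁ h₂ h₃
    by_cases hxr : x ∈ Set.range Δ.vpos
    · obtain ⟨u, hu⟩ := hxr
      have hu1 : u ∈ G.ends e₁.val := Δ.vertex_on_arc e₁.val u (by rw [hu]; exact h₁)
      have huS : u ∈ S.verts := S.closed e₁.val e₁.2 u hu1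
      exact absurd ⟨⟨u, huS⟩, hu⟩ hx
    · rcases Δ.at_most_two x hxr e₁.val e₂.val e₃.val h₁ h₂ h₃ with h | h | h
      · exact Or.inl (Subtype.ext h)
      · exact Or.inr (Or.inl (Subtype.ext h))
      · exact Or.inr (Or.inr (Subtype.ext h))

end Drawing

namespace MGraph

/-- A graph is planar if it has a drawing without crossings. -/
def IsPlanar (G : MGraph) : Prop := ∃ Δ : Drawing G, Δ.crossings = ∅

/-- The crossing number of `G` is at most `k`. -/
def CrossingNumberLE (G : MGraph) (k : ℕ) : Prop :=
  ∃ Δ : Drawing G, Δ.CrossingsAtMost k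

end MGraph

/-- A simple closed curve in the plane: a continuous injective image of a circle. -/
def IsSimpleClosedCurve (s : Set (ℝ × ℝ)) : Prop :=
  ∃ f : AddCircle (1 : ℝ) → ℝ × ℝ, Continuous f ∧ Function.Injective f ∧ Set.range f = s
/-! ### H-components -/

namespace MGraph

variable {G : MGraph}

/-- The subgraph consisting of a single edge together with its endpoints. -/
def edgeComp (G : MGraph) (e : G.E) : G.Subgraph where
  verts := {v | v ∈ G.ends e}
  edges := {e}
  closed := by
    rintro f rfl v hv
    exact hv

/-- For a subgraph `H` of `G` and a vertex `u ∉ H`, the `H`-component of `G`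
determined by `u`: the connected component of `G ∖ H` containing `u`, together with
all edges joining it to `H` and their endpoints in `H`. -/
def attachComp (G : MGraph) (H : G.Subgraph) (u : G.V) : G.Subgraph where
  verts := {v | (G.deleteVerts H.verts).Reach u v} ∪
    {v | v ∈ H.verts ∧ ∃ (e : G.E) (w : G.V), G.ends e = s(w, v) ∧
      (G.deleteVerts H.verts).Reach u w}
  edges := {e | e ∈ (G.deleteVerts H.verts).edges ∧
      ∀ v ∈ G.ends e, (G.deleteVerts H.verts).Reach u v} ∪
    {e | ∃ (w v : G.V), G.ends e = s(w, v) ∧ (G.deleteVerts H.verts).Reach u w ∧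
      v ∈ H.verts}
  closed := by
    rintro e (⟨-, he⟩ | ⟨w, v, hwv, hw, hv⟩) x hx
    · exact Or.inl (he x hx)
    · rw [hwv, Sym2.mem_iff] at hx
      rcases hx with rfl | rfl
      · exact Or.inl hw
      · exact Or.inr ⟨hv, e, w, hwv, hw⟩

/-- `C` is an `H`-component of `G`: either a connected component of `G ∖ H` together
with the edges joining it to `H` and their endpoints in `H`, or a single edge of
`G` outside `H` with both endpoints in `H`, together with its endpoints. -/
def IsHComp (G : MGraph) (H C : G.Subgraph) : Prop :=
  (∃ u : G.V, u ∉ H.verts ∧ C = G.attachComp H u) ∨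
  (∃ e : G.E, e ∉ H.edges ∧ (∀ v ∈ G.ends e, v ∈ H.verts) ∧ C = G.edgeComp e)

/-! ### Graph embeddings (subgraph copies) -/

/-- An embedding of the graph `H` into the graph `G`: injective maps on vertices and
edges that respect endpoints.  The image is a subgraph of `G` isomorphic to `H`. -/
structure Emb (H G : MGraph) where
  vmap : H.V → G.V
  emap : H.E → G.E
  vmap_inj : Function.Injective vmap
  emap_inj : Function.Injective emap
  ends_map : ∀ e : H.E, G.ends (emap e) = (H.ends e).map vmap

end MGraph

/-! ### Topological embeddings -/

/-- A topological embedding of `H` into `G`: an injective map on vertices together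
with, for every edge `e` of `H`, a path in `G` (recorded by its vertex set
`pVerts e` and edge set `pEdges e`) joining the images of the endpoints of `e` and
avoiding the images of all other vertices, such that the paths of distinct edges are
internally disjoint. -/
structure TopEmb (H G : MGraph) where
  vmap : H.V → G.V
  vmap_inj : Function.Injective vmap
  pVerts : H.E → Set G.V
  pEdges : H.E → Set G.E
  is_path : ∀ e : H.E, ∃ (a b : H.V) (w : G.Walk (vmap a) (vmap b)),
    H.ends e = s(a, b) ∧ w.IsPath ∧
    pVerts e = {x | x ∈ w.support} ∧ pEdges e = {f | f ∈ w.edgeList} ∧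
    ∀ u : H.V, u ∉ H.ends e → vmap u ∉ w.support
  int_disjoint : ∀ e f : H.E, e ≠ f → ∀ x ∈ pVerts e ∩ pVerts f,
    ∃ a : H.V, a ∈ H.ends e ∧ a ∈ H.ends f ∧ x = vmap a
  edge_disjoint : ∀ e f : H.E, e ≠ f → pEdges e ∩ pEdges f = ∅

namespace TopEmb

variable {H G : MGraph}

/-- The image `h(S)` of a subgraph `S ⊆ H` under a topological embedding `h`. -/
def imageOf (h : TopEmb H G) (S : H.Subgraph) : G.Subgraph where
  verts := (h.vmap '' S.verts) ∪ ⋃ e ∈ S.edges, h.pVerts e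
  edges := ⋃ e ∈ S.edges, h.pEdges e
  closed := by
    intro f hf v hv
    simp only [Set.mem_iUnion] at hf
    obtain ⟨e, he, hfe⟩ := hf
    obtain ⟨a, b, w, -, -, hV, hE, -⟩ := h.is_path e
    right
    simp only [Set.mem_iUnion]
    refine ⟨e, he, ?_⟩
    rw [hV]
    rw [hE] at hfe
    exact MGraph.Walk.mem_support_of_mem_edgeList w f v hfe hv

/-- The image `h(H)` of a topological embedding. -/
def image (h : TopEmb H G) : G.Subgraph := h.imageOf (MGraph.Subgraph.top H)

end TopEmb
/-! ### Hexagonal grids -/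

/-- The vertex type of the hexagonal grid of radius `r`: the vertices are arranged on
`r` concentric principal cycles, the `i`-th of which (counting from the inside,
starting at `i = 0`) has `6 * (2 * i + 1)` vertices. -/
abbrev HexV (r : ℕ) : Type := (i : Fin r) × ZMod (6 * (2 * i.val + 1))

/-- The endpoint on the `i`-th principal cycle of the `k`-th spoke joining the `i`-th
and the `(i+1)`-st principal cycle. -/
def spokeOutV (r : ℕ) (i : Fin (r - 1)) (k : ℕ) : HexV r :=
  ⟨⟨i.val, by have := i.isLt; omega⟩,
    ((k / (i.val + 1)) * (2 * i.val + 1) + 2 * (k % (i.val + 1)) : ℕ)⟩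

/-- The endpoint on the `(i+1)`-st principal cycle of the `k`-th spoke joining the
`i`-th and the `(i+1)`-st principal cycle. -/
def spokeInV (r : ℕ) (i : Fin (r - 1)) (k : ℕ) : HexV r :=
  ⟨⟨i.val + 1, by have := i.isLt; omega⟩,
    ((k / (i.val + 1)) * (2 * (i.val + 1) + 1) + 2 * (k % (i.val + 1)) + 1 : ℕ)⟩

/-- The hexagonal grid of radius `r` (`r` concentric cycles of hexagons): its vertices
lie on `r` principal cycles, the `i`-th principal cycle (0-indexed) having
`6 * (2 * i + 1)` vertices and being joined to the next one by `6 * (i + 1)` spokes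
attached alternatingly. -/
def hexGrid (r : ℕ) : MGraph where
  V := HexV r
  E := ((i : Fin r) × ZMod (6 * (2 * i.val + 1))) ⊕ ((i : Fin (r - 1)) × ZMod (6 * (i.val + 1)))
  ends := fun e => match e with
    | .inl ⟨i, j⟩ => s((⟨i, j⟩ : HexV r), ⟨i, j + 1⟩)
    | .inr ⟨i, k⟩ => s(spokeOutV r i k.val, spokeInV r i k.val)
  loopless := by
    rintro (⟨i, j⟩ | ⟨i, k⟩) h
    · rw [Sym2.mk_isDiag_iff] at h
      have hj : j = j + 1 := eq_of_heq (Sigma.ext_iff.mp h).2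
      have h1 : (1 : ZMod (6 * (2 * i.val + 1))) = 0 := left_eq_add.mp hj
      haveI : Fact (1 < 6 * (2 * i.val + 1)) := ⟨by omega⟩
      exact one_ne_zero h1
    · rw [Sym2.mk_isDiag_iff] at h
      have := congrArg (fun v : HexV r => v.1.val) h
      simp [spokeOutV, spokeInV] at this

@[simp] lemma hexGrid_ends_inl (r : ℕ) (i : Fin r) (j : ZMod (6 * (2 * i.val + 1))) :
    (hexGrid r).ends (Sum.inl ⟨i, j⟩) = s((⟨i, j⟩ : HexV r), ⟨i, j + 1⟩) := rfl

@[simp] lemma hexGrid_ends_inr (r : ℕ) (i : Fin (r - 1)) (k : ZMod (6 * (i.val + 1))) :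
    (hexGrid r).ends (Sum.inr ⟨i, k⟩) = s(spokeOutV r i k.val, spokeInV r i k.val) := rfl

/-- The `i`-th principal cycle of the hexagonal grid of radius `r` (`i` is 0-indexed,
so `i = ⟨0, _⟩` is the innermost principal cycle `C_1` of the paper and
`i = ⟨r-1, _⟩` the outermost one `C_r`). -/
def principalCycle (r : ℕ) (i : Fin r) : (hexGrid r).Subgraph where
  verts := {v | v.1 = i}
  edges := {e | ∃ j, e = Sum.inl ⟨i, j⟩}
  closed := by
    rintro e ⟨j, rfl⟩ v hv
    replace hv := Sym2.mem_iff.mp hv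
    rcases hv with rfl | rfl <;> rfl

/-- The subgrid `H^i` of the hexagonal grid bounded by the `i`-th principal cycle:
the induced subgraph on the vertices of the principal cycles `C_1, …, C_i`. -/
def hexSubgridLE (r : ℕ) (i : Fin r) : (hexGrid r).Subgraph :=
  (hexGrid r).induce {v | v.1 ≤ i}

/-- The subgrid `H^i ∖ C_i` of the hexagonal grid: everything strictly inside the
`i`-th principal cycle. -/
def hexSubgridLT (r : ℕ) (i : Fin r) : (hexGrid r).Subgraph :=
  (hexGrid r).induce {v | v.1 < i}

namespace TopEmb

variable {G : MGraph} {r : ℕ}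

/-- An attachment of a topological embedding `h : H_r → G`: an `h(H_r)`-component of
`G` that intersects the interior `h(H_r ∖ C_r)` of `h(H_r)`. -/
def IsAttachment (h : TopEmb (hexGrid r) G) (C : G.Subgraph) : Prop :=
  G.IsHComp h.image C ∧
  (C.verts ∩ (h.imageOf ((hexGrid r).deleteVerts {v | v.1.val = r - 1})).verts).Nonempty

/-- A topological embedding `h : H_r → G` is flat if the union of `h(H_r)` with all
its attachments is planar. -/
def Flat (h : TopEmb (hexGrid r) G) : Prop :=
  ((h.image.union (MGraph.Subgraph.sUnion {C | h.IsAttachment C})).toGraph).IsPlanar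

/-- The subgraph `K_i` of `G`: the image `h(H^i)` together with all attachments of
`h(H_r)` that intersect the interior `h(H^i ∖ C_i)`. -/
def K (h : TopEmb (hexGrid r) G) (i : Fin r) : G.Subgraph :=
  (h.imageOf (hexSubgridLE r i)).union
    (MGraph.Subgraph.sUnion {C | h.IsAttachment C ∧
      (C.verts ∩ (h.imageOf (hexSubgridLT r i)).verts).Nonempty})

/-- The edge set `F_i`: all edges of `K_i` having at least one endpoint on `h(C_i)`. -/
def Fset (h : TopEmb (hexGrid r) G) (i : Fin r) : Set G.E :=
  {e | e ∈ (h.K i).edges ∧ ∃ v ∈ G.ends e, v ∈ (h.imageOf (principalCycle r i)).verts}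

/-- The subgraph `I_i = K_i ∖ h(C_i)`: delete from `K_i` all vertices of `h(C_i)` and
all edges incident with them. -/
def Iset (h : TopEmb (hexGrid r) G) (i : Fin r) : G.Subgraph :=
  (h.K i).delete (h.imageOf (principalCycle r i)).verts

end TopEmb
/-! ### Graph constructions -/

namespace MGraph

open Classical in
/-- The graph obtained from `G` by contracting the (induced) subgraph on a vertex set
`A` to a single new vertex: all vertices of `A` and all edges with both endpoints in
`A` are deleted, a new vertex (the vertex `Sum.inr ()`) is added, and every edge with
exactly one endpoint in `A` now joins its other endpoint to the new vertex. -/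
noncomputable def contract (G : MGraph) (A : Set G.V) : MGraph where
  V := {v : G.V // v ∉ A} ⊕ Unit
  E := {e : G.E // ∃ v ∈ G.ends e, v ∉ A}
  ends := fun e => (G.ends e.val).map
    (fun v => if h : v ∈ A then Sum.inr () else Sum.inl ⟨v, h⟩)
  loopless := by
    intro e he
    obtain ⟨v, hv, hvA⟩ := e.2
    obtain ⟨⟨a, b⟩, hab⟩ := Quot.exists_rep (G.ends e.val)
    have hab' : G.ends e.val = s(a, b) := hab.symm
    have hne : a ≠ b := fun hh => G.loopless e.val (by rw [hab']; exact Sym2.mk_isDiag_iff.mpr hh)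
    rw [hab'] at he hv
    rw [Sym2.map_pair_eq, Sym2.mk_isDiag_iff] at he
    rw [Sym2.mem_iff] at hv
    by_cases ha : a ∈ A <;> by_cases hb : b ∈ A
    · rcases hv with rfl | rfl <;> exact hvA (by assumption)
    · rw [dif_pos ha, dif_neg hb] at he; exact absurd he (by simp)
    · rw [dif_neg ha, dif_pos hb] at he; exact absurd he (by simp)
    · rw [dif_neg ha, dif_neg hb] at he
      exact hne (congrArg Subtype.val (Sum.inl_injective he))

/-- The graph `G^{e₁ × e₂}` obtained from `G` by crossing the two distinct edges
`e₁` and `e₂`: delete `e₁` and `e₂`, add a new vertex (the vertex `Sum.inr ()`), and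
add four new edges joining the new vertex to the two endpoints of `e₁` and to the two
endpoints of `e₂`. -/
def crossAt (G : MGraph) (e₁ e₂ : G.E) : MGraph where
  V := G.V ⊕ Unit
  E := {e : G.E // e ≠ e₁ ∧ e ≠ e₂} ⊕
    {p : Fin 2 × G.V // p.2 ∈ G.ends (if p.1 = 0 then e₁ else e₂)}
  ends := fun f => match f with
    | .inl g => (G.ends g.val).map Sum.inl
    | .inr p => s(Sum.inl p.val.2, Sum.inr ())
  loopless := by
    rintro (g | p) h
    · exact G.loopless g.val ((Sym2.isDiag_map Sum.inl_injective).mp h)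
    · rw [Sym2.mk_isDiag_iff] at h
      exact absurd h (by simp)

/-- A set `F` of edges of `G`, viewed as a set of edges of `G^{e₁ × e₂}` (only
meaningful when `e₁, e₂ ∉ F`). -/
def liftF (G : MGraph) (e₁ e₂ : G.E) (F : Set G.E) : Set (G.crossAt e₁ e₂).E :=
  {f | ∃ g : {e : G.E // e ≠ e₁ ∧ e ≠ e₂}, f = Sum.inl g ∧ g.val ∈ F}

/-- The `j`-th vertex (for `0 ≤ j ≤ k`) on the path of length `k` replacing the
edge `e` in the subdivision of `G` in which every edge is subdivided `k - 1` times. -/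
noncomputable def subdivVert (G : MGraph) (k : ℕ) (e : G.E) (j : ℕ) : G.V ⊕ (G.E × Fin (k - 1)) :=
  if h0 : j = 0 then Sum.inl (Quot.out (G.ends e)).1
  else if h : j < k then Sum.inr (e, ⟨j - 1, by omega⟩)
  else Sum.inl (Quot.out (G.ends e)).2

/-- The graph `G̃` obtained from `G` by subdividing every edge `k - 1` times, that
is, replacing every edge by a path of length `k` (for `k ≥ 1`). -/
noncomputable def subdivide (G : MGraph) (k : ℕ) : MGraph where
  V := G.V ⊕ (G.E × Fin (k - 1))
  E := G.E × Fin k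
  ends := fun p => s(G.subdivVert k p.1 p.2.val, G.subdivVert k p.1 (p.2.val + 1))
  loopless := by
    rintro ⟨e, j⟩ h
    dsimp only at h
    rw [Sym2.mk_isDiag_iff] at h
    have hj : j.val < k := j.isLt
    unfold subdivVert at h
    by_cases h0 : j.val = 0
    · rw [dif_pos h0] at h
      by_cases h1 : j.val + 1 < k
      · rw [dif_neg (by omega), dif_pos h1] at h
        exact absurd h (by simp)
      · rw [dif_neg (by omega), dif_neg (by omega)] at h
        exact sym2_out_ne _ (G.loopless e) (Sum.inl_injective h)
    · rw [dif_neg h0, dif_pos hj] at h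
      by_cases h1 : j.val + 1 < k
      · rw [dif_neg (by omega), dif_pos h1] at h
        have h3 := Sum.inr_injective h
        rw [Prod.mk.injEq] at h3
        have h2 : j.val - 1 = j.val + 1 - 1 := congrArg Fin.val h3.2
        omega
      · rw [dif_neg (by omega), dif_neg (by omega)] at h
        exact absurd h (by simp)

/-- The set of edges of the subdivision `G̃` of `G` arising from the subdivision of
an edge in `F`. -/
def subdivF (G : MGraph) (k : ℕ) (F : Set G.E) : Set (G.subdivide k).E :=
  {p | p.1 ∈ F}

/-- The graph `G^{×ē}` obtained from `G` by successively crossing `e 0` with `e 1`,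
`e 2` with `e 3`, …, `e (2l-2)` with `e (2l-1)` (for pairwise distinct edges
`e 0, …, e (2l-1)`): the crossed edges are deleted, `l` new vertices are added (one
for each pair), and each new vertex is joined by four new edges to the endpoints of
the two edges of its pair. -/
def multiCross (G : MGraph) (l : ℕ) (e : Fin (2 * l) → G.E) : MGraph where
  V := G.V ⊕ Fin l
  E := {f : G.E // ∀ i, f ≠ e i} ⊕ {p : Fin (2 * l) × G.V // p.2 ∈ G.ends (e p.1)}
  ends := fun f => match f with
    | .inl g => (G.ends g.val).map Sum.inl
    | .inr p => s(Sum.inl p.val.2,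
        (Sum.inr ⟨p.val.1.val / 2, by have := p.val.1.isLt; omega⟩ : G.V ⊕ Fin l))
  loopless := by
    rintro (g | p) h
    · exact G.loopless g.val ((Sym2.isDiag_map Sum.inl_injective).mp h)
    · rw [Sym2.mk_isDiag_iff] at h
      exact absurd h (by simp)

end MGraph

/-! The crossing `x` of `e₁` and `e₂` becomes the new vertex: each of `e₁`, `e₂` is cut at `x`
into two halves, each reparametrized affinely so that it runs from its endpoint to `x`, and all
other curves are kept. Since `x` lies on no third curve and the two halves of one curve meet only
at `x`, this is a drawing of `G^{e₁×e₂}` whose crossings are those of `Δ` other than `x`. -/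

open Set AffineMap

lemma mapsTo_lineMap_Ioo {a t : ℝ} (ha : a ∈ Icc 0 1) (ht : t ∈ Ioo 0 1) :
    MapsTo (lineMap a t : ℝ → ℝ) (Ioo 0 1) (Ioo 0 1) := fun _ hs => by
  simpa only [interior_Icc] using (convex_Icc (0 : ℝ) 1).openSegment_self_interior_subset_interior
    ha (by rwa [interior_Icc]) (lineMap_mem_openSegment ℝ a t hs)

/-- Segments from the two ends of `[0, 1]` to a point `t` of it meet only at `t`. -/
lemma lineMap_eq_right_of_lineMap_eq {a b t s s' : ℝ} (ha : a = 0 ∨ a = 1) (hb : b = 0 ∨ b = 1)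
    (hab : a ≠ b) (ht : t ∈ Icc 0 1) (hs : s ∈ Icc 0 1) (hs' : s' ∈ Icc 0 1)
    (h : (lineMap a t : ℝ → ℝ) s = lineMap b t s') : (lineMap a t : ℝ → ℝ) s = t := by
  obtain ⟨ht0, ht1⟩ := ht
  obtain ⟨hs0, hs1⟩ := hs
  obtain ⟨hs0', hs1'⟩ := hs'
  rcases ha with rfl | rfl <;> rcases hb with rfl | rfl <;>
    simp only [ne_eq, not_true_eq_false] at hab <;>
    simp only [lineMap_apply_ring'] at h ⊢ <;>
    nlinarith [mul_nonneg hs0 ht0, mul_nonneg (sub_nonneg.2 hs1) ht0,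
      mul_nonneg hs0' ht0, mul_nonneg (sub_nonneg.2 hs1') ht0,
      mul_nonneg (sub_nonneg.2 hs1) (sub_nonneg.2 ht1),
      mul_nonneg (sub_nonneg.2 hs1') (sub_nonneg.2 ht1)]

namespace Drawing

variable {G : MGraph} (Δ : Drawing G)

lemma par_zero_mem_range (e : G.E) : Δ.par e 0 ∈ range Δ.vpos := by
  obtain ⟨v, -, -, h0, -⟩ := Δ.ends_match e
  exact ⟨v, h0.symm⟩

lemma par_one_mem_range (e : G.E) : Δ.par e 1 ∈ range Δ.vpos := by
  obtain ⟨-, w, -, -, h1⟩ := Δ.ends_match e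
  exact ⟨w, h1.symm⟩

noncomputable def endParam (e : G.E) (v : G.V) : ℝ := if Δ.par e 0 = Δ.vpos v then 0 else 1

lemma endParam_eq_zero_or_one (e : G.E) (v : G.V) : Δ.endParam e v = 0 ∨ Δ.endParam e v = 1 := by
  unfold endParam
  split_ifs <;> simp

lemma endParam_mem_Icc (e : G.E) (v : G.V) : Δ.endParam e v ∈ Icc 0 1 := by
  rcases Δ.endParam_eq_zero_or_one e v with h | h <;> simp [h]

variable {Δ} {e : G.E} {v w : G.V} {t : ℝ}

lemma par_endParam (hv : v ∈ G.ends e) : Δ.par e (Δ.endParam e v) = Δ.vpos v := by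
  unfold endParam
  split_ifs with h
  · exact h
  · obtain ⟨a, b, hab, h0, h1⟩ := Δ.ends_match e
    rw [hab, Sym2.mem_iff] at hv
    rcases hv with rfl | rfl
    exacts [absurd h0 h, h1]

lemma eq_of_endParam_eq (hv : v ∈ G.ends e) (hw : w ∈ G.ends e)
    (h : Δ.endParam e v = Δ.endParam e w) : v = w :=
  Δ.vpos_inj (by rw [← par_endParam hv, ← par_endParam hw, h])

variable (Δ) in
noncomputable def halfPar (e : G.E) (v : G.V) (t : ℝ) : ℝ → ℝ × ℝ :=
  Δ.par e ∘ (lineMap (Δ.endParam e v) t : ℝ → ℝ)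

lemma halfPar_zero (hv : v ∈ G.ends e) : Δ.halfPar e v t 0 = Δ.vpos v := by
  simp only [halfPar, Function.comp_apply, lineMap_apply_zero, par_endParam hv]

lemma halfPar_one : Δ.halfPar e v t 1 = Δ.par e t := by
  simp only [halfPar, Function.comp_apply, lineMap_apply_one]

lemma mapsTo_lineMap_endParam (ht : t ∈ Icc 0 1) :
    MapsTo (lineMap (Δ.endParam e v) t : ℝ → ℝ) (Icc 0 1) (Icc 0 1) :=
  (convex_Icc 0 1).mapsTo_lineMap (Δ.endParam_mem_Icc e v) ht

lemma continuousOn_halfPar (ht : t ∈ Icc 0 1) : ContinuousOn (Δ.halfPar e v t) (Icc 0 1) :=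
  (Δ.par_cont e).comp lineMap_continuous.continuousOn (mapsTo_lineMap_endParam ht)

lemma injOn_halfPar (ht : t ∈ Ioo 0 1) : InjOn (Δ.halfPar e v t) (Icc 0 1) := by
  refine (Δ.par_inj e).comp (lineMap_injective ℝ ?_).injOn
    (mapsTo_lineMap_endParam (Ioo_subset_Icc_self ht))
  rcases Δ.endParam_eq_zero_or_one e v with h | h <;> rw [h]
  exacts [ht.1.ne, ht.2.ne']

lemma image_halfPar_Icc_subset (ht : t ∈ Icc 0 1) : Δ.halfPar e v t '' Icc 0 1 ⊆ Δ.arc e := by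
  rw [halfPar, image_comp]
  exact image_mono (mapsTo_lineMap_endParam ht).image_subset

lemma image_halfPar_Ioo_subset (ht : t ∈ Ioo 0 1) :
    Δ.halfPar e v t '' Ioo 0 1 ⊆ Δ.par e '' Ioo 0 1 := by
  rw [halfPar, image_comp]
  exact image_mono (mapsTo_lineMap_Ioo (Δ.endParam_mem_Icc e v) ht).image_subset

lemma halfPar_inter_subset (hv : v ∈ G.ends e) (hw : w ∈ G.ends e) (hvw : v ≠ w)
    (ht : t ∈ Icc 0 1) :
    Δ.halfPar e v t '' Icc 0 1 ∩ Δ.halfPar e w t '' Icc 0 1 ⊆ {Δ.par e t} := by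
  rintro _ ⟨⟨s, hs, rfl⟩, ⟨s', hs', hss'⟩⟩
  have hpar := Δ.par_inj e (mapsTo_lineMap_endParam ht hs') (mapsTo_lineMap_endParam ht hs) hss'
  have hne : Δ.endParam e v ≠ Δ.endParam e w := fun h => hvw (eq_of_endParam_eq hv hw h)
  simp only [halfPar, Function.comp_apply, mem_singleton_iff]
  exact congrArg (Δ.par e) (lineMap_eq_right_of_lineMap_eq (Δ.endParam_eq_zero_or_one e v)
    (Δ.endParam_eq_zero_or_one e w) hne ht hs hs' hpar.symm)

lemma eq_of_vpos_mem_halfPar (hv : v ∈ G.ends e) (ht : t ∈ Ioo 0 1)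
    (hw : Δ.vpos w ∈ Δ.halfPar e v t '' Icc 0 1) : w = v := by
  obtain ⟨s, hs, hsw⟩ := hw
  have hsI : (lineMap (Δ.endParam e v) t : ℝ → ℝ) s ∈ Icc 0 1 :=
    mapsTo_lineMap_endParam (Ioo_subset_Icc_self ht) hs
  have hwe : w ∈ G.ends e := Δ.vertex_on_arc e w ⟨_, hsI, hsw⟩
  by_contra hwv
  have hpar : Δ.endParam e w = (lineMap (Δ.endParam e v) t : ℝ → ℝ) s :=
    Δ.par_inj e (Δ.endParam_mem_Icc e w) hsI ((par_endParam hwe).trans hsw.symm)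
  have hwt : Δ.endParam e w = t := hpar.trans <|
    lineMap_eq_right_of_lineMap_eq (Δ.endParam_eq_zero_or_one e v)
      (Δ.endParam_eq_zero_or_one e w) (fun h => hwv (eq_of_endParam_eq hwe hv h.symm))
      (Ioo_subset_Icc_self ht) hs (left_mem_Icc.2 zero_le_one)
      (hpar.symm.trans (lineMap_apply_zero _ _).symm)
  rcases Δ.endParam_eq_zero_or_one e w with h | h <;> rw [h] at hwt
  exacts [ht.1.ne hwt, ht.2.ne' hwt]

variable {x : ℝ × ℝ}

variable (Δ) in
noncomputable def paramAt (e : G.E) (x : ℝ × ℝ) : ℝ := Function.invFunOn (Δ.par e) (Icc 0 1) x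

lemma par_paramAt (he : x ∈ Δ.arc e) : Δ.par e (Δ.paramAt e x) = x :=
  Function.invFunOn_eq he

lemma paramAt_mem_Icc (he : x ∈ Δ.arc e) : Δ.paramAt e x ∈ Icc 0 1 :=
  Function.invFunOn_mem he

lemma paramAt_mem_Ioo (hx : x ∉ range Δ.vpos) (he : x ∈ Δ.arc e) : Δ.paramAt e x ∈ Ioo 0 1 := by
  obtain ⟨h0, h1⟩ := paramAt_mem_Icc he
  have hpar := par_paramAt he
  refine ⟨h0.lt_of_ne ?_, h1.lt_of_ne ?_⟩ <;> rintro h <;> apply hx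
  · rw [← hpar, ← h]; exact Δ.par_zero_mem_range e
  · rw [← hpar, h]; exact Δ.par_one_mem_range e

end Drawing

namespace MGraph

variable {G : MGraph} {e₁ e₂ : G.E}

/-- The edge of `G` along which an edge of `G^{e₁×e₂}` is drawn. -/
def crossAtParent : (G.crossAt e₁ e₂).E → G.E
  | .inl g => g.val
  | .inr q => if q.val.1 = 0 then e₁ else e₂

lemma crossAtParent_inl_ne_inr (g : {e : G.E // e ≠ e₁ ∧ e ≠ e₂})
    (q : {p : Fin 2 × G.V // p.2 ∈ G.ends (if p.1 = 0 then e₁ else e₂)}) :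
    crossAtParent (.inl g : (G.crossAt e₁ e₂).E) ≠ crossAtParent (.inr q) := by
  simp only [crossAtParent]
  split_ifs
  exacts [g.2.1, g.2.2]

lemma fst_eq_of_crossAtParent_inr_eq (hne : e₁ ≠ e₂)
    {q q' : {p : Fin 2 × G.V // p.2 ∈ G.ends (if p.1 = 0 then e₁ else e₂)}}
    (h : crossAtParent (.inr q : (G.crossAt e₁ e₂).E) = crossAtParent (.inr q')) :
    q.val.1 = q'.val.1 := by
  simp only [crossAtParent] at h
  split_ifs at h <;> first | omega | exact absurd h hne | exact absurd h.symm hne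

end MGraph

namespace Drawing

open MGraph

variable {G : MGraph} (Δ : Drawing G) {e₁ e₂ : G.E} (x : ℝ × ℝ)

noncomputable def crossAtPar : (G.crossAt e₁ e₂).E → ℝ → ℝ × ℝ
  | .inl g => Δ.par g.val
  | .inr q => Δ.halfPar (if q.val.1 = 0 then e₁ else e₂) q.val.2
      (Δ.paramAt (if q.val.1 = 0 then e₁ else e₂) x)

variable {Δ x}

lemma mem_arc_ite (hx₁ : x ∈ Δ.arc e₁) (hx₂ : x ∈ Δ.arc e₂) (i : Fin 2) :
    x ∈ Δ.arc (if i = 0 then e₁ else e₂) := by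
  split_ifs
  exacts [hx₁, hx₂]

lemma notMem_arc_of_ne (hne : e₁ ≠ e₂) (hx : x ∉ range Δ.vpos) (hx₁ : x ∈ Δ.arc e₁)
    (hx₂ : x ∈ Δ.arc e₂) {g : G.E} (hg₁ : g ≠ e₁) (hg₂ : g ≠ e₂) : x ∉ Δ.arc g := fun hg => by
  rcases Δ.at_most_two x hx e₁ e₂ g hx₁ hx₂ hg with h | h | h
  exacts [hne h, hg₁ h.symm, hg₂ h.symm]

lemma continuousOn_crossAtPar (hx₁ : x ∈ Δ.arc e₁) (hx₂ : x ∈ Δ.arc e₂) :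
    ∀ f : (G.crossAt e₁ e₂).E, ContinuousOn (Δ.crossAtPar x f) (Icc 0 1)
  | .inl g => Δ.par_cont g.val
  | .inr q => continuousOn_halfPar (paramAt_mem_Icc (mem_arc_ite hx₁ hx₂ q.val.1))

lemma injOn_crossAtPar (hx : x ∉ range Δ.vpos) (hx₁ : x ∈ Δ.arc e₁) (hx₂ : x ∈ Δ.arc e₂) :
    ∀ f : (G.crossAt e₁ e₂).E, InjOn (Δ.crossAtPar x f) (Icc 0 1)
  | .inl g => Δ.par_inj g.val
  | .inr q => injOn_halfPar (paramAt_mem_Ioo hx (mem_arc_ite hx₁ hx₂ q.val.1))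

lemma crossAtPar_inr_zero (q : {p : Fin 2 × G.V // p.2 ∈ G.ends (if p.1 = 0 then e₁ else e₂)}) :
    Δ.crossAtPar x (.inr q : (G.crossAt e₁ e₂).E) 0 = Δ.vpos q.val.2 :=
  halfPar_zero q.2

lemma crossAtPar_inr_one (hx₁ : x ∈ Δ.arc e₁) (hx₂ : x ∈ Δ.arc e₂)
    (q : {p : Fin 2 × G.V // p.2 ∈ G.ends (if p.1 = 0 then e₁ else e₂)}) :
    Δ.crossAtPar x (.inr q : (G.crossAt e₁ e₂).E) 1 = x :=
  halfPar_one.trans (par_paramAt (mem_arc_ite hx₁ hx₂ q.val.1))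

lemma image_crossAtPar_Icc_subset (hx₁ : x ∈ Δ.arc e₁) (hx₂ : x ∈ Δ.arc e₂) :
    ∀ f : (G.crossAt e₁ e₂).E, Δ.crossAtPar x f '' Icc 0 1 ⊆ Δ.arc (crossAtParent f)
  | .inl _ => Subset.rfl
  | .inr q => image_halfPar_Icc_subset (paramAt_mem_Icc (mem_arc_ite hx₁ hx₂ q.val.1))

lemma image_crossAtPar_Ioo_subset (hx : x ∉ range Δ.vpos) (hx₁ : x ∈ Δ.arc e₁)
    (hx₂ : x ∈ Δ.arc e₂) : ∀ f : (G.crossAt e₁ e₂).E,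
      Δ.crossAtPar x f '' Ioo 0 1 ⊆ Δ.par (crossAtParent f) '' Ioo 0 1
  | .inl _ => Subset.rfl
  | .inr q => image_halfPar_Ioo_subset (paramAt_mem_Ioo hx (mem_arc_ite hx₁ hx₂ q.val.1))

lemma eq_of_mem_crossAtPar (hne : e₁ ≠ e₂) (hx₁ : x ∈ Δ.arc e₁) (hx₂ : x ∈ Δ.arc e₂)
    {f f' : (G.crossAt e₁ e₂).E} (h : crossAtParent f = crossAtParent f') {y : ℝ × ℝ}
    (hyx : y ≠ x) (hy : y ∈ Δ.crossAtPar x f '' Icc 0 1) (hy' : y ∈ Δ.crossAtPar x f' '' Icc 0 1) :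
    f = f' := by
  rcases f with g | ⟨⟨i, v⟩, hv⟩ <;> rcases f' with g' | ⟨⟨i', v'⟩, hv'⟩
  · exact congrArg Sum.inl (Subtype.ext h)
  · exact absurd h (crossAtParent_inl_ne_inr _ _)
  · exact absurd h.symm (crossAtParent_inl_ne_inr _ _)
  · obtain rfl : i = i' := fst_eq_of_crossAtParent_inr_eq hne h
    by_cases hvv : v = v'
    · subst hvv; rfl
    · refine absurd ?_ hyx
      exact (halfPar_inter_subset hv hv' hvv (paramAt_mem_Icc (mem_arc_ite hx₁ hx₂ i))
        ⟨hy, hy'⟩).trans (par_paramAt (mem_arc_ite hx₁ hx₂ i))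

lemma crossAtPar_mem_ends (hne : e₁ ≠ e₂) (hx : x ∉ range Δ.vpos) (hx₁ : x ∈ Δ.arc e₁)
    (hx₂ : x ∈ Δ.arc e₂) : ∀ (f : (G.crossAt e₁ e₂).E) (u : (G.crossAt e₁ e₂).V),
      Sum.elim Δ.vpos (fun _ => x) u ∈ Δ.crossAtPar x f '' Icc 0 1 → u ∈ (G.crossAt e₁ e₂).ends f
  | .inl g, .inl v, hv => Sym2.mem_map.2 ⟨v, Δ.vertex_on_arc g.val v hv, rfl⟩
  | .inl g, .inr (), hv => absurd hv (notMem_arc_of_ne hne hx hx₁ hx₂ g.2.1 g.2.2)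
  | .inr q, .inl v, hv => by
      rw [eq_of_vpos_mem_halfPar q.2 (paramAt_mem_Ioo hx (mem_arc_ite hx₁ hx₂ q.val.1)) hv]
      exact Sym2.mem_mk_left _ _
  | .inr _, .inr (), _ => Sym2.mem_mk_right _ _

lemma subsingleton_crossAtPar_inter (hne : e₁ ≠ e₂) (hx : x ∉ range Δ.vpos)
    (hx₁ : x ∈ Δ.arc e₁) (hx₂ : x ∈ Δ.arc e₂) {f f' : (G.crossAt e₁ e₂).E} (hff' : f ≠ f') :
    (Δ.crossAtPar x f '' Ioo 0 1 ∩ Δ.crossAtPar x f' '' Ioo 0 1).Subsingleton := by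
  by_cases h : crossAtParent f = crossAtParent f'
  · refine (subsingleton_singleton (a := x)).anti fun y ⟨hy, hy'⟩ => ?_
    by_contra hyx
    exact hff' (eq_of_mem_crossAtPar hne hx₁ hx₂ h hyx (image_mono Ioo_subset_Icc_self hy)
      (image_mono Ioo_subset_Icc_self hy'))
  · exact (Δ.arcs_inter _ _ h).anti (inter_subset_inter
      (image_crossAtPar_Ioo_subset hx hx₁ hx₂ f) (image_crossAtPar_Ioo_subset hx hx₁ hx₂ f'))

lemma crossAtPar_at_most_two (hne : e₁ ≠ e₂) (hx₁ : x ∈ Δ.arc e₁) (hx₂ : x ∈ Δ.arc e₂)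
    {y : ℝ × ℝ} (hy : y ∉ range Δ.vpos) (hyx : y ≠ x) (f₁ f₂ f₃ : (G.crossAt e₁ e₂).E)
    (h₁ : y ∈ Δ.crossAtPar x f₁ '' Icc 0 1) (h₂ : y ∈ Δ.crossAtPar x f₂ '' Icc 0 1)
    (h₃ : y ∈ Δ.crossAtPar x f₃ '' Icc 0 1) : f₁ = f₂ ∨ f₁ = f₃ ∨ f₂ = f₃ := by
  have hsub := image_crossAtPar_Icc_subset hx₁ hx₂
  rcases Δ.at_most_two y hy _ _ _ (hsub f₁ h₁) (hsub f₂ h₂) (hsub f₃ h₃) with h | h | h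
  · exact .inl (eq_of_mem_crossAtPar hne hx₁ hx₂ h hyx h₁ h₂)
  · exact .inr (.inl (eq_of_mem_crossAtPar hne hx₁ hx₂ h hyx h₁ h₃))
  · exact .inr (.inr (eq_of_mem_crossAtPar hne hx₁ hx₂ h hyx h₂ h₃))

variable (Δ x) in
noncomputable def crossAtDrawing (hne : e₁ ≠ e₂) (hx : x ∉ range Δ.vpos) (hx₁ : x ∈ Δ.arc e₁)
    (hx₂ : x ∈ Δ.arc e₂) : Drawing (G.crossAt e₁ e₂) where
  vpos := Sum.elim Δ.vpos fun _ => x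
  par := Δ.crossAtPar x
  par_cont := continuousOn_crossAtPar hx₁ hx₂
  par_inj := injOn_crossAtPar hx hx₁ hx₂
  ends_match
    | .inl g => by
        obtain ⟨v, w, hvw, h0, h1⟩ := Δ.ends_match g.val
        exact ⟨.inl v, .inl w, by simp only [crossAt, hvw, Sym2.map_mk], h0, h1⟩
    | .inr q => ⟨.inl q.val.2, .inr (), rfl, crossAtPar_inr_zero q, crossAtPar_inr_one hx₁ hx₂ q⟩
  vpos_inj := Δ.vpos_inj.sumElim (fun _ _ _ => rfl) fun v _ h => hx ⟨v, h⟩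
  arcs_inter _ _ := subsingleton_crossAtPar_inter hne hx hx₁ hx₂
  vertex_on_arc := crossAtPar_mem_ends hne hx hx₁ hx₂
  at_most_two y hy := crossAtPar_at_most_two hne hx₁ hx₂ (fun ⟨v, hv⟩ => hy ⟨.inl v, hv⟩)
    fun hyx => hy ⟨.inr (), hyx.symm⟩

lemma crossings_crossAtDrawing_subset (hne : e₁ ≠ e₂) (hx : x ∉ range Δ.vpos)
    (hx₁ : x ∈ Δ.arc e₁) (hx₂ : x ∈ Δ.arc e₂) :
    (Δ.crossAtDrawing x hne hx hx₁ hx₂).crossings ⊆ Δ.crossings \ {x} := by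
  rintro y ⟨hy, f, f', hff', hyf, hyf'⟩
  have hyx : y ≠ x := fun h => hy ⟨.inr (), h.symm⟩
  have hsub := image_crossAtPar_Icc_subset hx₁ hx₂
  exact ⟨⟨fun ⟨v, hv⟩ => hy ⟨.inl v, hv⟩, _, _,
    fun h => hff' (eq_of_mem_crossAtPar hne hx₁ hx₂ h hyx hyf hyf'), hsub f hyf, hsub f' hyf'⟩, hyx⟩

lemma crossingsAtMost_crossAtDrawing (hfin : Δ.crossings.Finite) (hne : e₁ ≠ e₂)
    (hx : Δ.IsCrossing x) (hx₁ : x ∈ Δ.arc e₁) (hx₂ : x ∈ Δ.arc e₂) :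
    (Δ.crossAtDrawing x hne hx.1 hx₁ hx₂).CrossingsAtMost (Δ.crossings.ncard - 1) := by
  have hsub := crossings_crossAtDrawing_subset hne hx.1 hx₁ hx₂
  exact ⟨hfin.subset (hsub.trans sdiff_subset),
    (ncard_le_ncard hsub hfin.sdiff).trans_eq (ncard_sdiff_singleton_of_mem hx)⟩

lemma not_involved_crossAtDrawing_inl (hne : e₁ ≠ e₂) (hx : x ∉ range Δ.vpos)
    (hx₁ : x ∈ Δ.arc e₁) (hx₂ : x ∈ Δ.arc e₂) {g : {e : G.E // e ≠ e₁ ∧ e ≠ e₂}}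
    (hg : ¬Δ.Involved g.val) : ¬(Δ.crossAtDrawing x hne hx hx₁ hx₂).Involved (.inl g) :=
  fun ⟨y, hy, hyg⟩ => hg ⟨y, (crossings_crossAtDrawing_subset hne hx hx₁ hx₂ hy).1, hyg⟩

theorem exists_crossAt_drawing_of_isCrossing {F : Set G.E} (hF : ∀ e ∈ F, ¬Δ.Involved e)
    (hfin : Δ.crossings.Finite) (hne : e₁ ≠ e₂) (hx : Δ.IsCrossing x) (hx₁ : x ∈ Δ.arc e₁)
    (hx₂ : x ∈ Δ.arc e₂) :
    e₁ ∉ F ∧ e₂ ∉ F ∧ ∃ Δ' : Drawing (G.crossAt e₁ e₂),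
      Δ'.CrossingsAtMost (Δ.crossings.ncard - 1) ∧ ∀ f ∈ G.liftF e₁ e₂ F, ¬Δ'.Involved f :=
  ⟨fun h => hF e₁ h ⟨x, hx, hx₁⟩, fun h => hF e₂ h ⟨x, hx, hx₂⟩,
    Δ.crossAtDrawing x hne hx.1 hx₁ hx₂, crossingsAtMost_crossAtDrawing hfin hne hx hx₁ hx₂,
    fun _ ⟨_, hf, hgF⟩ => hf ▸ not_involved_crossAtDrawing_inl hne hx.1 hx₁ hx₂ (hF _ hgF)⟩

end Drawing

/-- If `Δ` is a drawing of `G` in which no forbidden edge is involved in a crossing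
and `x ∈ Δ(e₁) ∩ Δ(e₂)` is a crossing of `Δ`, then `e₁, e₂ ∉ F` and the graph
`G^{e₁×e₂}` has a drawing with fewer crossings keeping all forbidden edges crossing-free.
In particular, if `G` has an `l`-good drawing (`l ≥ 1`) with respect to `F` that has
at least one crossing, then for some distinct edges `e₁, e₂ ∈ E^G ∖ F` the graph
`G^{e₁×e₂}` has an `(l-1)`-good drawing with respect to `F`. -/
theorem crossAt_of_crossing (G : MGraph) (F : Set G.E) :
    (∀ Δ : Drawing G, (∀ e ∈ F, ¬ Δ.Involved e) → Δ.crossings.Finite →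
      ∀ (x : ℝ × ℝ) (e₁ e₂ : G.E), e₁ ≠ e₂ → Δ.IsCrossing x →
        x ∈ Δ.arc e₁ → x ∈ Δ.arc e₂ →
        e₁ ∉ F ∧ e₂ ∉ F ∧
        ∃ Δ' : Drawing (G.crossAt e₁ e₂),
          Δ'.CrossingsAtMost (Δ.crossings.ncard - 1) ∧
          ∀ f ∈ G.liftF e₁ e₂ F, ¬ Δ'.Involved f) ∧
    ∀ l : ℕ, 1 ≤ l → ∀ Δ : Drawing G, Δ.IsGood l F → Δ.crossings.Nonempty →
      ∃ e₁ e₂ : G.E, e₁ ≠ e₂ ∧ e₁ ∉ F ∧ e₂ ∉ F ∧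
        ∃ Δ' : Drawing (G.crossAt e₁ e₂), Δ'.IsGood (l - 1) (G.liftF e₁ e₂ F) := by
  refine ⟨fun Δ hF hfin x e₁ e₂ => Δ.exists_crossAt_drawing_of_isCrossing hF hfin,
    fun l _ Δ ⟨⟨hfin, hl⟩, hF⟩ ⟨x, hx⟩ => ?_⟩
  obtain ⟨-, e₁, e₂, hne, hx₁, hx₂⟩ := id hx
  obtain ⟨he₁, he₂, Δ', ⟨hfin', hcard⟩, hF'⟩ :=
    Δ.exists_crossAt_drawing_of_isCrossing hF hfin hne hx hx₁ hx₂
  exact ⟨e₁, e₂, hne, he₁, he₂, Δ', ⟨hfin', hcard.trans (Nat.sub_le_sub_right hl 1)⟩, hF'⟩
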